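/- With a perfect DI oracle (DI(i,j;S) = 1 if the directed information I(X_i → X_j ‖ X_S) = 0 and DI(i,j;S) = 0 if it is positive), the MMPC-p algorithm is sound and complete: after Phase I the candidate set CP(j) contains Pa(j), and after Phase II, CP(j) = Pa(j), assuming the local Markov property (I(X_i → X_j ‖ X_{Pa(j)}) = 0 whenever i ∉ Pa(j) ∪ {j}) and the monotone faithfulness assumption (if I(X_i → X_j ‖ X_{[m]∖{i,j}}) > 0 then I(X_i → X_j ‖ X_A) > 0 for all A ⊆ [m]∖{i,j}). -/

import Mathlib

/-!
With a perfect oracle, `α - min α (DI i j F)` vanishes exactly when `I(X_i → X_j ‖ X_F) = 0`,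
so both phases become statements about vanishing directed information. Phase I cannot leave
out a parent `i`: it is excluded only if some `F ⊆ CP(j)` separates it from `j`, and such an `F`
avoids `i` and `j`, which monotone faithfulness forbids. Phase II then keeps each parent by the
same argument, and drops every non-parent `i ∈ CP(j)` because `Pa(j) ⊆ CP(j) ∖ {i}` separates
it from `j` by the local Markov property.
-/

open Finset

section Oracle

variable {α : ℝ} {p : Prop} [Decidable p]

theorem sub_min_ite_eq_zero_iff (hα₀ : 0 < α) (hα₁ : α ≤ 1) :
    α - min α (if p then 1 else 0) = 0 ↔ p := by
  split_ifs with hp <;> simp [hp, min_eq_left hα₁, min_eq_right hα₀.le, hα₀.ne']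

theorem sub_min_ite_pos_iff (hα₀ : 0 < α) (hα₁ : α ≤ 1) :
    0 < α - min α (if p then 1 else 0) ↔ ¬p := by
  rw [(sub_nonneg.2 (min_le_left _ _)).lt_iff_ne', ne_eq, sub_min_ite_eq_zero_iff hα₀ hα₁]

end Oracle

section MMPC

variable {ι : Type*} [Fintype ι] [DecidableEq ι] {j : ι} {Indep : ι → Finset ι → Prop}
  {Pa CP : Finset ι}

theorem subset_univ_sdiff_pair {F C : Finset ι} {i : ι} (hF : F ⊆ C) (hi : i ∉ C)
    (hj : j ∉ C) : F ⊆ univ \ {i, j} := by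
  intro x hx
  simp only [mem_sdiff, mem_univ, mem_insert, mem_singleton, true_and, not_or]
  exact ⟨ne_of_mem_of_not_mem (hF hx) hi, ne_of_mem_of_not_mem (hF hx) hj⟩

theorem parents_subset_of_phaseOne (hPa : ∀ i ∈ Pa, i ≠ j)
    (hFaith : ∀ i ∈ Pa, ∀ A ⊆ univ \ {i, j}, ¬Indep i A) (hj : j ∉ CP)
    (hPhase1 : ∀ i, i ≠ j → i ∉ CP → ∃ F ⊆ CP, Indep i F) : Pa ⊆ CP := by
  intro i hi
  by_contra hiCP
  obtain ⟨F, hF, hIndep⟩ := hPhase1 i (hPa i hi) hiCP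
  exact hFaith i hi F (subset_univ_sdiff_pair hF hiCP hj) hIndep

theorem phaseTwo_iff_mem_parents (hMarkov : ∀ i, i ≠ j → i ∉ Pa → Indep i Pa)
    (hFaith : ∀ i ∈ Pa, ∀ A ⊆ univ \ {i, j}, ¬Indep i A) (hj : j ∉ CP) (hPaCP : Pa ⊆ CP)
    (i : ι) : (i ∈ CP ∧ ∀ F ⊆ CP \ {i}, ¬Indep i F) ↔ i ∈ Pa := by
  constructor
  · rintro ⟨hiCP, hDep⟩
    by_contra hiPa
    have hij : i ≠ j := ne_of_mem_of_not_mem hiCP hj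
    exact hDep Pa (subset_sdiff.2 ⟨hPaCP, disjoint_singleton_right.2 hiPa⟩)
      (hMarkov i hij hiPa)
  · intro hi
    refine ⟨hPaCP hi, fun F hF => hFaith i hi F (subset_univ_sdiff_pair hF ?_ ?_)⟩
    · exact notMem_sdiff_of_mem_right (mem_singleton_self i)
    · exact fun hj' => hj (mem_sdiff.1 hj').1

end MMPC

theorem mmpcp_sound_complete_general
    (m : ℕ) (α : ℝ) (hα : α ∈ Set.Ioo (0 : ℝ) 1)
    (I : Fin m → Fin m → Finset (Fin m) → ℝ)
    (j : Fin m)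
    (Pa : Finset (Fin m))
    (hPa : ∀ i, i ∈ Pa ↔ i ≠ j ∧ 0 < I i j (Finset.univ \ {i, j}))
    (DI : Fin m → Fin m → Finset (Fin m) → ℝ)
    (hOracle : ∀ i k S, DI i k S = if I i k S = 0 then 1 else 0)
    (hMarkov : ∀ i, i ≠ j → i ∉ Pa → I i j Pa = 0)
    (hFaith : ∀ i ∈ Pa, ∀ A : Finset (Fin m), A ⊆ Finset.univ \ {i, j} → 0 < I i j A)
    (CP1 : Finset (Fin m)) (hjCP1 : j ∉ CP1)
    (hPhase1 : ∀ i, i ≠ j → i ∉ CP1 →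
      ∃ F : Finset (Fin m), F ⊆ CP1 ∧ α - min α (DI i j F) = 0)
    (CP2 : Finset (Fin m))
    (hPhase2 : ∀ i, i ∈ CP2 ↔ i ∈ CP1 ∧
      ∀ F : Finset (Fin m), F ⊆ CP1 \ {i} → 0 < α - min α (DI i j F)) :
    Pa ⊆ CP1 ∧ CP2 = Pa := by
  simp_rw [hOracle, sub_min_ite_eq_zero_iff hα.1 hα.2.le] at hPhase1
  simp_rw [hOracle, sub_min_ite_pos_iff hα.1 hα.2.le] at hPhase2
  have hFaith' : ∀ i ∈ Pa, ∀ A ⊆ univ \ {i, j}, ¬I i j A = 0 :=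
    fun i hi A hA => (hFaith i hi A hA).ne'
  have hPaCP1 : Pa ⊆ CP1 :=
    parents_subset_of_phaseOne (fun i hi => ((hPa i).1 hi).1) hFaith' hjCP1 hPhase1
  refine ⟨hPaCP1, ?_⟩
  ext i
  rw [hPhase2, phaseTwo_iff_mem_parents hMarkov hFaith' hjCP1 hPaCP1]

/-- Soundness and completeness of MMPC-p with a perfect DI oracle.
`I i j S` is the directed information `I(X_i → X_j ‖ X_S)` (nonnegative); the true parent set
is `Pa = {i : I(X_i → X_j ‖ X_{[m]∖{i,j}}) > 0}`; the perfect oracle returns p-value 1 when the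
directed information vanishes and 0 otherwise.  Under the local Markov property and the
monotone faithfulness assumption, after Phase I the candidate set `CP1` contains `Pa`, and the
Phase II output `CP2` equals `Pa`. -/
theorem mmpcp_sound_complete
    (m : ℕ) (α : ℝ) (hα : α ∈ Set.Ioo (0 : ℝ) 1)
    (I : Fin m → Fin m → Finset (Fin m) → ℝ)
    (hInonneg : ∀ i j S, 0 ≤ I i j S)
    (j : Fin m)
    (Pa : Finset (Fin m))
    (hPa : ∀ i, i ∈ Pa ↔ i ≠ j ∧ 0 < I i j (Finset.univ \ {i, j}))
    (DI : Fin m → Fin m → Finset (Fin m) → ℝ)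
    (hOracle : ∀ i k S, DI i k S = if I i k S = 0 then 1 else 0)
    (hMarkov : ∀ i, i ≠ j → i ∉ Pa → I i j Pa = 0)
    (hFaith : ∀ i ∈ Pa, ∀ A : Finset (Fin m), A ⊆ Finset.univ \ {i, j} → 0 < I i j A)
    (CP1 : Finset (Fin m)) (hjCP1 : j ∉ CP1)
    (hPhase1 : ∀ i, i ≠ j → i ∉ CP1 →
      ∃ F : Finset (Fin m), F ⊆ CP1 ∧ α - min α (DI i j F) = 0)
    (CP2 : Finset (Fin m))
    (hPhase2 : ∀ i, i ∈ CP2 ↔ i ∈ CP1 ∧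
      ∀ F : Finset (Fin m), F ⊆ CP1 \ {i} → 0 < α - min α (DI i j F)) :
    Pa ⊆ CP1 ∧ CP2 = Pa :=
  mmpcp_sound_complete_general m α hα I j Pa hPa DI hOracle hMarkov hFaith CP1 hjCP1 hPhase1 CP2
    hPhase2
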